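/- For 𝒫 = (Jo^r, DP^r) and all n ≥ 1, the cost of local monotonicity on the class 𝔚 of weighted games satisfies c_𝒫(n,𝔚) ≥ 1 − 2(3n−2)/n², and in particular c_𝒫(n,𝔚) ≥ 1 − 6/n. -/

import Mathlib

open scoped Classical

/-- A simple game on the player set `{1,…,n}` (modeled as `Fin n`):
a monotone map from coalitions to `{0,1}` (modeled as `Bool`) that is
`0` on the empty coalition and `1` on the grand coalition. -/
structure SimpleGame (n : ℕ) where
  win : Finset (Fin n) → Bool
  win_empty : win ∅ = false
  win_univ : win Finset.univ = true
  win_mono : ∀ ⦃S T : Finset (Fin n)⦄, S ⊆ T → win S = true → win T = true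

namespace SimpleGame

variable {n : ℕ}

/-- Player `i` dominates player `j`: `v((S ∪ {i}) \ {j}) ≥ v(S)` for every
coalition `S` with `j ∈ S` and `i ∉ S`. -/
def Dominates (v : SimpleGame n) (i j : Fin n) : Prop :=
  ∀ S : Finset (Fin n), j ∈ S → i ∉ S → v.win S ≤ v.win ((S ∪ {i}) \ {j})

/-- The game is complete if the dominance relation is a total preorder. -/
def IsComplete (v : SimpleGame n) : Prop :=
  (∀ i, v.Dominates i i) ∧
  (∀ i j, v.Dominates i j ∨ v.Dominates j i) ∧
  (∀ i j k, v.Dominates i j → v.Dominates j k → v.Dominates i k)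

/-- `S` is a minimal winning coalition: winning and every proper subset is losing. -/
def IsMWC (v : SimpleGame n) (S : Finset (Fin n)) : Prop :=
  v.win S = true ∧ ∀ T ⊂ S, v.win T = false

/-- `M_i`: the set of minimal winning coalitions containing player `i`. -/
noncomputable def Mset (v : SimpleGame n) (i : Fin n) : Finset (Finset (Fin n)) :=
  Finset.univ.filter fun S => v.IsMWC S ∧ i ∈ S

/-- `M_i(l)`: minimal winning coalitions of cardinality `l` containing `i`. -/
noncomputable def Mlset (v : SimpleGame n) (i : Fin n) (l : ℕ) : Finset (Finset (Fin n)) :=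
  (v.Mset i).filter fun S => S.card = l

/-- Raw Public Good index: `PGI^r_i(v) = |M_i|`. -/
noncomputable def PGI (v : SimpleGame n) (i : Fin n) : ℕ := (v.Mset i).card

/-- Raw Deegan-Packel index: `DP^r_i(v) = Σ_{S ∈ M_i} 1/|S|`. -/
noncomputable def DP (v : SimpleGame n) (i : Fin n) : ℝ :=
  ∑ S ∈ v.Mset i, (1 : ℝ) / (S.card : ℝ)

/-- The game is uniform if all minimal winning coalitions have the same cardinality. -/
def IsUniform (v : SimpleGame n) : Prop :=
  ∀ S T, v.IsMWC S → v.IsMWC T → S.card = T.card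

/-- `[q; w]` is a weighted representation of `v`. -/
def IsWeightedRep (v : SimpleGame n) (q : ℝ) (w : Fin n → ℝ) : Prop :=
  0 < q ∧ (∀ i, 0 ≤ w i) ∧ ∀ S : Finset (Fin n), v.win S = true ↔ q ≤ ∑ i ∈ S, w i

/-- The game is weighted. -/
def IsWeighted (v : SimpleGame n) : Prop := ∃ q w, v.IsWeightedRep q w

/-- `D_i`: coalitions decisive for player `i`. -/
noncomputable def Dset (v : SimpleGame n) (i : Fin n) : Finset (Finset (Fin n)) :=
  Finset.univ.filter fun S => i ∈ S ∧ v.win S = true ∧ v.win (S.erase i) = false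

/-- Raw Banzhaf index: `Bz^r_i(v) = |D_i|`. -/
noncomputable def Bz (v : SimpleGame n) (i : Fin n) : ℕ := (v.Dset i).card

/-- `S` is a shift-minimal winning coalition. -/
def IsSMWC (v : SimpleGame n) (S : Finset (Fin n)) : Prop :=
  v.IsMWC S ∧ ∀ i ∈ S, ∀ j ∉ S, v.Dominates i j → ¬ v.Dominates j i →
    v.win ((S \ {i}) ∪ {j}) = false

/-- `𝒮_i`: the set of shift-minimal winning coalitions containing player `i`. -/
noncomputable def Sset (v : SimpleGame n) (i : Fin n) : Finset (Finset (Fin n)) :=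
  Finset.univ.filter fun S => v.IsSMWC S ∧ i ∈ S

/-- Raw Shift index: `S^r_i(v) = |𝒮_i|`. -/
noncomputable def ShiftIdx (v : SimpleGame n) (i : Fin n) : ℕ := (v.Sset i).card

/-- The number of players for which the coalition `S` is decisive. -/
noncomputable def numDecisive (v : SimpleGame n) (S : Finset (Fin n)) : ℕ :=
  (Finset.univ.filter fun k => k ∈ S ∧ v.win S = true ∧ v.win (S.erase k) = false).card

/-- Raw Johnston index: `Jo^r_i(v) = Σ_{S ∈ D_i} 1/#{decisive players of S}`. -/
noncomputable def Jo (v : SimpleGame n) (i : Fin n) : ℝ :=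
  ∑ S ∈ v.Dset i, (1 : ℝ) / (v.numDecisive S : ℝ)

/-- `i` is a null player: it belongs to no minimal winning coalition. -/
def IsNull (v : SimpleGame n) (i : Fin n) : Prop := ∀ S, v.IsMWC S → i ∉ S

end SimpleGame

/-- A power index: assigns to every `n`-player simple game a vector in `ℝ^n`. -/
abbrev PowerIndex : Type := ∀ n : ℕ, SimpleGame n → Fin n → ℝ

/-- A class of games (one set of games for every number of players). -/
abbrev GameClass : Type := ∀ n : ℕ, Set (SimpleGame n)

/-- Convex combination `P^α = Σ_h α_h P^h` of power indices. -/
noncomputable def convexComb {r : ℕ} (α : Fin r → ℝ) (P : Fin r → PowerIndex) : PowerIndex :=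
  fun n v i => ∑ h, α h * P h n v i

/-- `Q` satisfies local monotonicity on the `n`-player games of `𝔊`. -/
def LMon (𝔊 : GameClass) (n : ℕ) (Q : PowerIndex) : Prop :=
  ∀ v ∈ 𝔊 n, ∀ i j : Fin n, v.Dominates i j → Q n v j ≤ Q n v i

/-- The cost of local monotonicity `c_𝒫(n,𝔊)`. -/
noncomputable def costLM {r : ℕ} [NeZero r] (P : Fin r → PowerIndex) (n : ℕ)
    (𝔊 : GameClass) : ℝ :=
  sInf {β : ℝ | β ∈ Set.Icc (0 : ℝ) 1 ∧
    ∀ α ∈ stdSimplex ℝ (Fin r), β ≤ α 0 → LMon 𝔊 n (convexComb α P)}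

/-- The raw Banzhaf index as a power index. -/
noncomputable def BzPI : PowerIndex := fun _ v i => (v.Bz i : ℝ)

/-- The raw Public Good index as a power index. -/
noncomputable def PGIPI : PowerIndex := fun _ v i => (v.PGI i : ℝ)

/-- The raw Shift index as a power index. -/
noncomputable def ShiftPI : PowerIndex := fun _ v i => (v.ShiftIdx i : ℝ)

/-- The raw Johnston index as a power index. -/
noncomputable def JoPI : PowerIndex := fun _ v i => v.Jo i

/-- The raw Deegan-Packel index as a power index. -/
noncomputable def DPPI : PowerIndex := fun _ v i => v.DP i

/-- `𝔚`: the class of weighted games. -/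
def WeightedClass : GameClass := fun _ => {v | v.IsWeighted}

/-!
The raw Johnston index is locally monotone on every simple game: if `i ⊒ j`, exchanging `j` for
`i` maps the coalitions decisive for `j` injectively to coalitions decisive for `i` with at most
as many decisive members. Hence `β = 1` is admissible and the infimum is over a nonempty set.

For the lower bound let `g = ⌊n/2⌋` and consider the weighted game in which a fixed `g`-set `B`
wins, as does every coalition with more than `g` members. A member `i` of `B` dominates a
non-member `j`. Every coalition decisive for `j` is minimal winning, so `Jo_j = DP_j`, whereas
`i` is also decisive in the `n - g` non-minimal coalitions `B ∪ {k}`, each with `g` decisive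
members, so `Jo_i = DP_i + (n - g)/g`. Counting minimal winning coalitions gives
`DP_j - DP_i = (n - g - 1)/(g + 1) - 1/g`, so local monotonicity of `β Jo + (1 - β) DP` forces
`β (n - g)/g ≥ (n - g - 1)/(g + 1) - 1/g`, which rearranges to `β ≥ 1 - 2(3n - 2)/n²`.
-/

open Finset

section Counting

variable {α : Type*} [Fintype α] [DecidableEq α]

lemma card_filter_superset_card_eq_succ (s : Finset α) :
    #{t : Finset α | s ⊆ t ∧ #t = #s + 1} = #sᶜ := by
  have himage : ({t : Finset α | s ⊆ t ∧ #t = #s + 1} : Finset (Finset α)) =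
      sᶜ.image (insert · s) := by
    ext t
    simp only [mem_filter, mem_univ, true_and, mem_image, mem_compl]
    rw [exists_eq_insert_iff, eq_comm (a := #t)]
  rw [himage, card_image_of_injOn]
  intro a ha b _ hab
  exact (insert_inj (mem_compl.mp ha)).mp hab

lemma card_filter_mem_card_eq_swap (a b : α) (m : ℕ) :
    #{s : Finset α | a ∈ s ∧ #s = m} = #{s : Finset α | b ∈ s ∧ #s = m} :=
  card_equiv (Equiv.swap a b).finsetCongr fun s => by simp

/-- Of the `#s + 1`-sets through `a ∉ s` only `insert a s` contains `s`, whereas all `#sᶜ`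
such supersets of `s` pass through `b ∈ s`. -/
lemma card_filter_card_eq_succ_not_superset {s : Finset α} {a b : α} (ha : a ∉ s) (hb : b ∈ s) :
    #{t : Finset α | a ∈ t ∧ #t = #s + 1 ∧ ¬ s ⊆ t} + 1 =
      #{t : Finset α | b ∈ t ∧ #t = #s + 1 ∧ ¬ s ⊆ t} + #sᶜ := by
  have hsplit (c : α) :
      #{t : Finset α | c ∈ t ∧ #t = #s + 1 ∧ ¬ s ⊆ t} +
        #{t : Finset α | c ∈ t ∧ #t = #s + 1 ∧ s ⊆ t} = #{t : Finset α | c ∈ t ∧ #t = #s + 1} := by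
    rw [← card_filter_add_card_filter_not (s := {t : Finset α | c ∈ t ∧ #t = #s + 1}) (s ⊆ ·),
      add_comm]
    simp only [filter_filter, and_assoc]
  have ha1 : #{t : Finset α | a ∈ t ∧ #t = #s + 1 ∧ s ⊆ t} = 1 := by
    refine card_eq_one.mpr ⟨insert a s, Finset.ext fun t => ?_⟩
    simp only [mem_filter, mem_univ, true_and, mem_singleton]
    constructor
    · rintro ⟨hat, hcard, hst⟩
      refine (eq_of_subset_of_card_le (insert_subset hat hst) ?_).symm
      rw [hcard, card_insert_of_notMem ha]
    · rintro rfl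
      exact ⟨mem_insert_self a s, card_insert_of_notMem ha, subset_insert a s⟩
  have hbs : #{t : Finset α | b ∈ t ∧ #t = #s + 1 ∧ s ⊆ t} = #sᶜ := by
    rw [← card_filter_superset_card_eq_succ]
    congr 1
    exact filter_congr fun t _ => ⟨fun h => ⟨h.2.2, h.2.1⟩, fun h => ⟨h.1 hb, h.2, h.1⟩⟩
  have := card_filter_mem_card_eq_swap a b (#s + 1)
  have := hsplit a
  have := hsplit b
  omega

end Counting

namespace SimpleGame

variable {n : ℕ} {v : SimpleGame n} {i j : Fin n} {S T : Finset (Fin n)}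

lemma mem_Dset : S ∈ v.Dset i ↔ i ∈ S ∧ v.win S = true ∧ v.win (S.erase i) = false := by
  simp [Dset]

lemma numDecisive_pos (hS : S ∈ v.Dset i) : 0 < v.numDecisive S :=
  card_pos.mpr ⟨i, by simpa [mem_Dset] using hS⟩

lemma isMWC_iff_forall_erase :
    v.IsMWC S ↔ v.win S = true ∧ ∀ k ∈ S, v.win (S.erase k) = false := by
  refine and_congr_right fun _ => ⟨fun h k hk => h _ (erase_ssubset hk), fun h T hTS => ?_⟩
  obtain ⟨k, hk, hTk⟩ := ssubset_iff_exists_subset_erase.mp hTS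
  exact Bool.eq_false_iff.mpr fun hT => by simpa [h k hk] using v.win_mono hTk hT

lemma Mset_subset_Dset : v.Mset i ⊆ v.Dset i := by
  intro S hS
  simp only [Mset, mem_filter, mem_univ, true_and, isMWC_iff_forall_erase] at hS
  exact mem_Dset.mpr ⟨hS.2, hS.1.1, hS.1.2 i hS.2⟩

lemma numDecisive_of_isMWC (hS : v.IsMWC S) : v.numDecisive S = #S := by
  rw [isMWC_iff_forall_erase] at hS
  unfold numDecisive
  congr 1
  ext k
  simp only [mem_filter, mem_univ, true_and, and_iff_left_iff_imp]
  exact fun hk => ⟨hS.1, hS.2 k hk⟩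

/-- A minimal winning coalition is decisive for each of its members, so it contributes
`1 / |S|` to both indices. -/
lemma Jo_eq_DP_add (i : Fin n) :
    v.Jo i = v.DP i + ∑ S ∈ v.Dset i \ v.Mset i, 1 / (v.numDecisive S : ℝ) := by
  rw [Jo, ← sum_sdiff Mset_subset_Dset, add_comm, DP]
  congr 1
  refine sum_congr rfl fun S hS => ?_
  simp only [Mset, mem_filter] at hS
  rw [numDecisive_of_isMWC hS.2.1]

lemma Dominates.win_insert_erase (h : v.Dominates i j) (hij : i ≠ j) (hj : j ∈ S) (hi : i ∉ S)
    (hS : v.win S = true) : v.win (insert i (S.erase j)) = true := by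
  have hset : (S ∪ {i}) \ {j} = insert i (S.erase j) := by
    rw [union_singleton, sdiff_singleton_eq_erase, erase_insert_of_ne hij]
  have := h S hj hi
  rw [hS, hset] at this
  exact top_le_iff.mp this

lemma Dominates.win_eq_false (h : v.Dominates i j) (hij : i ≠ j) (hj : j ∈ T) (hi : i ∉ T)
    (hT : v.win (insert i (T.erase j)) = false) : v.win T = false :=
  Bool.eq_false_iff.mpr fun hwin => by simp [h.win_insert_erase hij hj hi hwin] at hT

def exchange (i j : Fin n) (S : Finset (Fin n)) : Finset (Fin n) :=
  if i ∈ S then S else insert i (S.erase j)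

lemma exchange_injOn (hij : i ≠ j) : Set.InjOn (exchange i j) {S | j ∈ S} := by
  have hj : ∀ S : Finset (Fin n), j ∉ insert i (S.erase j) := by simp [hij.symm]
  intro S₁ h₁ S₂ h₂ heq
  simp only [Set.mem_ofPred_eq] at h₁ h₂
  unfold exchange at heq
  split_ifs at heq with hi₁ hi₂ hi₂
  · exact heq
  · exact absurd (heq ▸ h₁) (hj S₂)
  · exact absurd (heq ▸ h₂) (hj S₁)
  · have := congrArg (fun T => insert j (T.erase i)) heq
    simpa [erase_insert, hi₁, hi₂, insert_erase, h₁, h₂] using this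

lemma Dominates.exchange_mem_Dset (h : v.Dominates i j) (hij : i ≠ j) (hS : S ∈ v.Dset j) :
    exchange i j S ∈ v.Dset i := by
  rw [mem_Dset] at hS ⊢
  obtain ⟨hjS, hwin, hlose⟩ := hS
  unfold exchange
  split_ifs with hiS
  · refine ⟨hiS, hwin, h.win_eq_false hij (mem_erase.mpr ⟨hij.symm, hjS⟩) (notMem_erase _ _) ?_⟩
    rwa [erase_right_comm, insert_erase (mem_erase.mpr ⟨hij, hiS⟩)]
  · exact ⟨mem_insert_self _ _, h.win_insert_erase hij hjS hiS hwin,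
      by rwa [erase_insert (fun h => hiS (mem_of_mem_erase h))]⟩

/-- The transposition `(i j)` maps the decisive players of `exchange i j S` injectively to
decisive players of `S`. -/
lemma Dominates.numDecisive_exchange_le (h : v.Dominates i j) (hij : i ≠ j)
    (hS : S ∈ v.Dset j) : v.numDecisive (exchange i j S) ≤ v.numDecisive S := by
  unfold exchange
  split_ifs with hiS
  · exact le_rfl
  obtain ⟨hjS, hwin, hlose⟩ := mem_Dset.mp hS
  refine card_le_card_of_injOn (Equiv.swap i j) (fun k hk => ?_) (Equiv.injective _).injOn
  simp only [coe_filter, mem_univ, true_and, Set.mem_ofPred_eq] at hk ⊢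
  obtain ⟨hk, -, hklose⟩ := hk
  rcases eq_or_ne k i with rfl | hki
  · simpa using ⟨hjS, hwin, hlose⟩
  obtain ⟨hkj, hkS⟩ := mem_erase.mp ((mem_insert.mp hk).resolve_left hki)
  rw [Equiv.swap_apply_of_ne_of_ne hki hkj]
  refine ⟨hkS, hwin, h.win_eq_false hij (mem_erase.mpr ⟨hkj.symm, hjS⟩)
    (fun h => hiS (mem_of_mem_erase h)) ?_⟩
  rwa [erase_right_comm, ← erase_insert_of_ne hki.symm]

theorem Jo_le_Jo_of_dominates (h : v.Dominates i j) : v.Jo j ≤ v.Jo i := by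
  rcases eq_or_ne i j with rfl | hij
  · exact le_rfl
  have hinj : Set.InjOn (exchange i j) (v.Dset j) :=
    (exchange_injOn hij).mono fun S hS => (mem_Dset.mp hS).1
  calc v.Jo j
      ≤ ∑ S ∈ v.Dset j, 1 / (v.numDecisive (exchange i j S) : ℝ) := by
        refine sum_le_sum fun S hS => one_div_le_one_div_of_le ?_ ?_
        · exact_mod_cast numDecisive_pos (h.exchange_mem_Dset hij hS)
        · exact_mod_cast h.numDecisive_exchange_le hij hS
    _ = ∑ T ∈ (v.Dset j).image (exchange i j), 1 / (v.numDecisive T : ℝ) :=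
        by rw [sum_image hinj]
    _ ≤ v.Jo i := by
        refine sum_le_sum_of_subset_of_nonneg ?_ fun _ _ _ => by positivity
        exact image_subset_iff.mpr fun S hS => h.exchange_mem_Dset hij hS

end SimpleGame

namespace SimpleGame

variable {n : ℕ} {B : Finset (Fin n)}

def heavyGame (B : Finset (Fin n)) (hB : B.Nonempty) : SimpleGame n where
  win S := decide (B ⊆ S ∨ #B < #S)
  win_empty := by simpa using hB.ne_empty
  win_univ := by simp
  win_mono S T hST := by
    simp only [decide_eq_true_eq]
    exact Or.imp (fun h => h.trans hST) (fun h => h.trans_le (card_le_card hST))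

variable (hB : B.Nonempty) {S : Finset (Fin n)} {i j : Fin n}

lemma heavyGame_win : (heavyGame B hB).win S = true ↔ B ⊆ S ∨ #B < #S := by
  simp [heavyGame]

lemma heavyGame_lose : (heavyGame B hB).win S = false ↔ ¬ B ⊆ S ∧ #S ≤ #B := by
  simp [heavyGame]

lemma heavyGame_isWeighted : (heavyGame B hB).IsWeighted := by
  have hg := hB.card_pos
  refine ⟨#B * (#B + 1), fun k => #B + if k ∈ B then 1 else 0, by positivity,
    fun k => by positivity, fun S => ?_⟩
  have hsum : ∑ k ∈ S, ((#B : ℝ) + if k ∈ B then 1 else 0) = #B * #S + #(S ∩ B) := by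
    rw [sum_add_distrib, sum_const, sum_boole, nsmul_eq_mul, filter_mem_eq_inter, mul_comm]
  rw [hsum, heavyGame_win]
  norm_cast
  have hSB : #(S ∩ B) ≤ #S := card_le_card inter_subset_left
  constructor
  · rintro (hBS | hcard)
    · rw [inter_eq_right.mpr hBS]
      nlinarith [card_le_card hBS]
    · nlinarith
  · intro hq
    by_contra! hlose
    have hinter : #(S ∩ B) < #B :=
      card_lt_card (ssubset_of_subset_of_ne inter_subset_right
        fun h => hlose.1 (h ▸ inter_subset_left))
    nlinarith

lemma heavyGame_dominates (hi : i ∈ B) (hj : j ∉ B) : (heavyGame B hB).Dominates i j := by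
  intro S hjS hiS
  cases hS : (heavyGame B hB).win S
  · exact Bool.false_le _
  have hcard : #B < #S := ((heavyGame_win hB).mp hS).resolve_left fun h => hiS (h hi)
  have hij : i ≠ j := fun h => hj (h ▸ hi)
  have hswap : #((S ∪ {i}) \ {j}) = #S := by
    rw [union_singleton, sdiff_singleton_eq_erase, erase_insert_of_ne hij,
      card_insert_of_notMem fun h => hiS (mem_of_mem_erase h), card_erase_add_one hjS]
  rw [(heavyGame_win hB).mpr (Or.inr (hswap ▸ hcard))]

lemma heavyGame_isMWC_iff : (heavyGame B hB).IsMWC S ↔ S = B ∨ (¬ B ⊆ S ∧ #S = #B + 1) := by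
  simp only [isMWC_iff_forall_erase, heavyGame_win, heavyGame_lose]
  constructor
  · rintro ⟨hwin, hmin⟩
    by_cases hBS : B ⊆ S
    · left
      by_contra hne
      obtain ⟨k, hkS, hkB⟩ := exists_of_ssubset (hBS.ssubset_of_ne (Ne.symm hne))
      exact (hmin k hkS).1 (subset_erase.mpr ⟨hBS, hkB⟩)
    · have hcard := hwin.resolve_left hBS
      obtain ⟨k, hk⟩ := card_pos.mp (Nat.zero_lt_of_lt hcard)
      have := (hmin k hk).2
      rw [card_erase_of_mem hk] at this
      exact Or.inr ⟨hBS, by omega⟩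
  · rintro (rfl | ⟨hBS, hcard⟩)
    · exact ⟨Or.inl subset_rfl,
        fun k hk => ⟨fun h => notMem_erase k S (h hk), (card_erase_lt_of_mem hk).le⟩⟩
    · refine ⟨Or.inr (by omega), fun k hk => ⟨fun h => hBS (h.trans (erase_subset k S)), ?_⟩⟩
      rw [card_erase_of_mem hk]
      omega

lemma heavyGame_Dset_subset_Mset (hj : j ∉ B) :
    (heavyGame B hB).Dset j ⊆ (heavyGame B hB).Mset j := by
  intro S hS
  obtain ⟨hjS, hwin, hlose⟩ := mem_Dset.mp hS
  rw [heavyGame_win] at hwin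
  rw [heavyGame_lose, subset_erase, card_erase_of_mem hjS] at hlose
  have hBS : ¬ B ⊆ S := fun h => hlose.1 ⟨h, hj⟩
  have hcard := hwin.resolve_left hBS
  simp only [Mset, mem_filter, mem_univ, true_and, heavyGame_isMWC_iff]
  exact ⟨Or.inr ⟨hBS, by omega⟩, hjS⟩

lemma heavyGame_Dset_sdiff_Mset (hi : i ∈ B) :
    (heavyGame B hB).Dset i \ (heavyGame B hB).Mset i =
      ({S | B ⊆ S ∧ #S = #B + 1} : Finset (Finset (Fin n))) := by
  ext S
  simp only [mem_sdiff, mem_Dset, Mset, mem_filter, mem_univ, true_and, heavyGame_isMWC_iff,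
    heavyGame_win, heavyGame_lose, subset_erase]
  constructor
  · rintro ⟨⟨hiS, hwin, hlose⟩, hnM⟩
    rw [card_erase_of_mem hiS] at hlose
    by_cases hBS : B ⊆ S
    · have hne : S ≠ B := fun h => hnM ⟨Or.inl h, hiS⟩
      have := card_lt_card (hBS.ssubset_of_ne hne.symm)
      exact ⟨hBS, by omega⟩
    · have hcard := hwin.resolve_left hBS
      exact absurd ⟨Or.inr ⟨hBS, by omega⟩, hiS⟩ hnM
  · rintro ⟨hBS, hcard⟩
    refine ⟨⟨hBS hi, Or.inl hBS, fun h => h.2 hi, ?_⟩, ?_⟩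
    · rw [card_erase_of_mem (hBS hi)]
      omega
    · rintro ⟨rfl | ⟨hBS', -⟩, -⟩
      · omega
      · exact hBS' hBS

lemma heavyGame_numDecisive (hBS : B ⊆ S) (hcard : #S = #B + 1) :
    (heavyGame B hB).numDecisive S = #B := by
  unfold numDecisive
  congr 1
  ext k
  simp only [mem_filter, mem_univ, true_and, heavyGame_win, heavyGame_lose, subset_erase]
  constructor
  · rintro ⟨-, -, hlose, -⟩
    by_contra hk
    exact hlose ⟨hBS, hk⟩
  · intro hk
    refine ⟨hBS hk, Or.inl hBS, fun h => h.2 hk, ?_⟩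
    rw [card_erase_of_mem (hBS hk)]
    omega

lemma heavyGame_Jo_eq_DP (hj : j ∉ B) : (heavyGame B hB).Jo j = (heavyGame B hB).DP j := by
  rw [Jo_eq_DP_add, sdiff_eq_empty_iff_subset.mpr (heavyGame_Dset_subset_Mset hB hj), sum_empty,
    add_zero]

lemma heavyGame_Jo_eq_DP_add (hi : i ∈ B) :
    (heavyGame B hB).Jo i = (heavyGame B hB).DP i + (n - #B) / #B := by
  rw [Jo_eq_DP_add, heavyGame_Dset_sdiff_Mset hB hi, sum_congr rfl fun S hS => by
    rw [heavyGame_numDecisive hB (mem_filter.mp hS).2.1 (mem_filter.mp hS).2.2], sum_const,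
    card_filter_superset_card_eq_succ, card_compl, Fintype.card_fin, nsmul_eq_mul,
    Nat.cast_sub (by simpa using card_le_univ B), mul_one_div]

lemma heavyGame_Mset_erase (k : Fin n) :
    ((heavyGame B hB).Mset k).erase B =
      ({S | k ∈ S ∧ #S = #B + 1 ∧ ¬ B ⊆ S} : Finset (Finset (Fin n))) := by
  refine Finset.ext fun S => ?_
  simp only [mem_erase, Mset, mem_filter, mem_univ, true_and, heavyGame_isMWC_iff]
  constructor
  · rintro ⟨hne, rfl | ⟨hBS, hcard⟩, hk⟩
    · exact absurd rfl hne
    · exact ⟨hk, hcard, hBS⟩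
  · rintro ⟨hk, hcard, hBS⟩
    exact ⟨by rintro rfl; exact hBS subset_rfl, Or.inr ⟨hBS, hcard⟩, hk⟩

lemma heavyGame_sum_Mset_erase (k : Fin n) :
    ∑ S ∈ ((heavyGame B hB).Mset k).erase B, (1 : ℝ) / #S =
      #({S | k ∈ S ∧ #S = #B + 1 ∧ ¬ B ⊆ S} : Finset (Finset (Fin n))) / (#B + 1) := by
  rw [heavyGame_Mset_erase, sum_congr rfl fun S hS => by rw [(mem_filter.mp hS).2.2.1], sum_const,
    nsmul_eq_mul, mul_one_div]
  push_cast
  rfl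

lemma heavyGame_DP_of_notMem (hj : j ∉ B) :
    (heavyGame B hB).DP j =
      #({S | j ∈ S ∧ #S = #B + 1 ∧ ¬ B ⊆ S} : Finset (Finset (Fin n))) / (#B + 1) := by
  have hBM : B ∉ (heavyGame B hB).Mset j := by simp [Mset, hj]
  rw [DP, ← erase_eq_of_notMem hBM, heavyGame_sum_Mset_erase]

lemma heavyGame_DP_of_mem (hi : i ∈ B) :
    (heavyGame B hB).DP i = 1 / #B +
      #({S | i ∈ S ∧ #S = #B + 1 ∧ ¬ B ⊆ S} : Finset (Finset (Fin n))) / (#B + 1) := by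
  have hBM : B ∈ (heavyGame B hB).Mset i := by simp [Mset, heavyGame_isMWC_iff, hi]
  rw [DP, ← add_sum_erase _ _ hBM, heavyGame_sum_Mset_erase]

lemma heavyGame_DP_sub_DP (hi : i ∈ B) (hj : j ∉ B) :
    (heavyGame B hB).DP j - (heavyGame B hB).DP i = (n - #B - 1) / (#B + 1) - 1 / #B := by
  have hcount := card_filter_card_eq_succ_not_superset hj hi
  rw [card_compl, Fintype.card_fin] at hcount
  have hBn : #B ≤ n := by simpa using card_le_univ B
  have hcount' := congrArg (fun m : ℕ => (m : ℝ)) hcount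
  push_cast [Nat.cast_sub hBn] at hcount'
  rw [heavyGame_DP_of_notMem hB hj, heavyGame_DP_of_mem hB hi, eq_sub_of_add_eq hcount']
  ring

end SimpleGame

lemma convexComb_eq_of_one_le {r : ℕ} [NeZero r] {α : Fin r → ℝ}
    (hα : α ∈ stdSimplex ℝ (Fin r)) (h1 : 1 ≤ α 0) (P : Fin r → PowerIndex) :
    convexComb α P = P 0 := by
  obtain ⟨hnonneg, hsum⟩ := hα
  rw [← add_sum_erase _ _ (mem_univ 0)] at hsum
  have hrest : ∀ h ∈ univ.erase 0, α h = 0 :=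
    (sum_eq_zero_iff_of_nonneg fun h _ => hnonneg h).mp
      (le_antisymm (by linarith) (sum_nonneg fun h _ => hnonneg h))
  have h0 : α 0 = 1 := by simpa [sum_eq_zero hrest] using hsum
  funext n v i
  rw [convexComb, sum_eq_single 0 (fun h _ hh => by simp [hrest h (mem_erase.mpr ⟨hh, mem_univ _⟩)])
    (by simp), h0, one_mul]

lemma one_sub_le_of_le_mul {n g : ℕ} (hg : 1 ≤ g) (hn : n = 2 * g ∨ n = 2 * g + 1) {β : ℝ}
    (h : ((n : ℝ) - g - 1) / (g + 1) - 1 / g ≤ β * ((n - g) / g)) :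
    1 - 2 * (3 * (n : ℝ) - 2) / (n : ℝ) ^ 2 ≤ β := by
  have hg' : (1 : ℝ) ≤ g := by exact_mod_cast hg
  obtain ⟨m, hm, hmg⟩ : ∃ m : ℝ, (n : ℝ) = g + m ∧ (m = g ∨ m = g + 1) := by
    rcases hn with rfl | rfl <;> push_cast
    exacts [⟨g, by ring, Or.inl rfl⟩, ⟨g + 1, by ring, Or.inr rfl⟩]
  rw [hm] at h ⊢
  have hm1 : 1 ≤ m := by rcases hmg with rfl | rfl <;> linarith
  have hcleared : g * (m - 1) - (g + 1) ≤ β * (m * (g + 1)) := by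
    have := mul_le_mul_of_nonneg_left h (by positivity : (0 : ℝ) ≤ g * (g + 1))
    field_simp at this
    linarith
  rw [one_sub_div (by positivity), div_le_iff₀ (by positivity)]
  refine le_of_mul_le_mul_right ?_ (by positivity : (0 : ℝ) < m * (g + 1))
  have := mul_le_mul_of_nonneg_left hcleared (sq_nonneg ((g : ℝ) + m))
  rcases hmg with rfl | rfl <;> nlinarith

open SimpleGame in
lemma lower_bound_of_LMon_Jo_DP {n : ℕ} (hn : 2 ≤ n) {β : ℝ}
    (h : LMon WeightedClass n (convexComb ![β, 1 - β] ![JoPI, DPPI])) :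
    1 - 2 * (3 * (n : ℝ) - 2) / (n : ℝ) ^ 2 ≤ β := by
  let j : Fin n := ⟨0, by omega⟩
  obtain ⟨B, hBj, hB⟩ := exists_subset_card_eq (s := univ.erase j) (n := n / 2) (by simp; omega)
  obtain ⟨i, hi⟩ := card_pos.mp (hB ▸ (by omega : 0 < n / 2))
  have hBne : B.Nonempty := ⟨i, hi⟩
  have hj : j ∉ B := fun h => notMem_erase j univ (hBj h)
  have hLM := h _ (heavyGame_isWeighted hBne) i j (heavyGame_dominates hBne hi hj)
  simp only [convexComb, Fin.sum_univ_two, JoPI, DPPI, Matrix.cons_val_zero,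
    Matrix.cons_val_one] at hLM
  rw [heavyGame_Jo_eq_DP _ hj, heavyGame_Jo_eq_DP_add _ hi] at hLM
  have hdiff := heavyGame_DP_sub_DP hBne hi hj
  rw [hB] at hLM hdiff
  refine one_sub_le_of_le_mul (g := n / 2) (by omega) (by omega) ?_
  linarith

/-- for `𝒫 = (Jo^r, DP^r)` and `n ≥ 1`, the cost of local
monotonicity on weighted games is at least `1 - 2(3n-2)/n²`, and in particular
at least `1 - 6/n`. -/
theorem costLM_Jo_DP_lower_bound (n : ℕ) (hn : 1 ≤ n) :
    1 - 2 * (3 * (n : ℝ) - 2) / (n : ℝ) ^ 2 ≤ costLM ![JoPI, DPPI] n WeightedClass ∧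
    1 - 6 / (n : ℝ) ≤ costLM ![JoPI, DPPI] n WeightedClass := by
  have hbound : 1 - 2 * (3 * (n : ℝ) - 2) / (n : ℝ) ^ 2 ≤ costLM ![JoPI, DPPI] n WeightedClass := by
    refine le_csInf ⟨1, ⟨zero_le_one, le_rfl⟩, fun α hα h1 v _ i j hij => ?_⟩ ?_
    · rw [convexComb_eq_of_one_le hα h1]
      exact v.Jo_le_Jo_of_dominates hij
    rintro β ⟨⟨hβ0, hβ1⟩, hβ⟩
    rcases (by omega : n = 1 ∨ 2 ≤ n) with rfl | hn2
    · norm_num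
      linarith
    · refine lower_bound_of_LMon_Jo_DP hn2 (hβ _ ⟨fun k => ?_, by simp⟩ le_rfl)
      fin_cases k <;> simp [hβ0, hβ1]
  refine ⟨hbound, le_trans ?_ hbound⟩
  have hn0 : (0 : ℝ) < n := by exact_mod_cast hn
  rw [sub_le_sub_iff_left, div_le_div_iff₀ (by positivity) hn0]
  nlinarith
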